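/- For every unitary matrix U = (u_{αβ}) ∈ M_3(ℂ), define V ∈ M_3(ℂ) by V = [[conj(u₃₃), −conj(u₃₂), conj(u₃₁)], [−conj(u₂₃), conj(u₂₂), −conj(u₂₁)], [conj(u₁₃), −conj(u₁₂), conj(u₁₁)]]. Then V is unitary and for every X ∈ M_3(ℂ) one has Φ(U X U†) = V Φ(X) V†; i.e., in the case j = 1 the Landau–Streater channel is globally unitarily (U(3)) covariant. -/

import Mathlib

open Matrix Complex

noncomputable section

/-- Spin-1 matrix `Jₓ = (1/√2)·[[0,1,0],[1,0,1],[0,1,0]]`. -/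
def J1x : Matrix (Fin 3) (Fin 3) ℂ :=
  ((Real.sqrt 2 : ℂ))⁻¹ • !![0, 1, 0; 1, 0, 1; 0, 1, 0]

/-- Spin-1 matrix `J_y = (1/√2)·[[0,-i,0],[i,0,-i],[0,i,0]]`. -/
def J1y : Matrix (Fin 3) (Fin 3) ℂ :=
  ((Real.sqrt 2 : ℂ))⁻¹ • !![0, -Complex.I, 0; Complex.I, 0, -Complex.I; 0, Complex.I, 0]

/-- Spin-1 matrix `J_z = diag(1,0,-1)`. -/
def J1z : Matrix (Fin 3) (Fin 3) ℂ := !![1, 0, 0; 0, 0, 0; 0, 0, -1]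

/-- The spin-1 (j = 1) Landau–Streater map `Φ(X) = (JₓXJₓ + J_yXJ_y + J_zXJ_z)/2`. -/
def LS1 (X : Matrix (Fin 3) (Fin 3) ℂ) : Matrix (Fin 3) (Fin 3) ℂ :=
  (1/2 : ℂ) • (J1x * X * J1x + J1y * X * J1y + J1z * X * J1z)

end

/-! With `K = [[0,0,1],[0,-1,0],[1,0,0]]`, a direct computation gives
`Φ(X) = (tr X • 1 - K Xᵀ K) / 2`. The trace is invariant under unitary conjugation, and
transposition turns conjugation by `U` into conjugation by its entrywise conjugate `Ū`, so
`Φ(U X U†) = V Φ(X) V†` with `V = K Ū K`, which is the matrix of the statement. -/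

theorem Matrix.conjTranspose_map_star {m n α : Type*} [InvolutiveStar α] (A : Matrix m n α) :
    (A.map star)ᴴ = Aᵀ := by
  ext; simp

section UnitaryConj

variable {m n : Type*} [Fintype n] {α : Type*} [CommRing α] [StarRing α]

theorem Matrix.transpose_mul_mul_conjTranspose (U : Matrix m n α) (X : Matrix n n α) :
    (U * X * Uᴴ)ᵀ = U.map star * Xᵀ * (U.map star)ᴴ := by
  rw [conjTranspose_map_star, transpose_mul, transpose_mul, conjTranspose_transpose,
    Matrix.mul_assoc]

variable [DecidableEq n]

theorem Matrix.trace_mul_mul_conjTranspose_of_mem_unitaryGroup {U : Matrix n n α}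
    (hU : U ∈ unitaryGroup n α) (X : Matrix n n α) : trace (U * X * Uᴴ) = trace X := by
  rw [trace_mul_cycle, ← star_eq_conjTranspose, mem_unitaryGroup_iff'.mp hU, one_mul]

theorem Matrix.mul_map_star_mul_mem_unitaryGroup {K U : Matrix n n α}
    (hK : K ∈ unitaryGroup n α) (hU : U ∈ unitaryGroup n α) :
    K * U.map star * K ∈ unitaryGroup n α :=
  mul_mem (mul_mem hK (map_star_mem_unitaryGroup_iff.mpr hU)) hK

theorem Matrix.trace_smul_one_sub_mul_transpose_mul_unitary_conj {K U : Matrix n n α}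
    (hK : K ∈ unitaryGroup n α) (hKh : Kᴴ = K) (hU : U ∈ unitaryGroup n α)
    (X : Matrix n n α) :
    trace (U * X * Uᴴ) • (1 : Matrix n n α) - K * (U * X * Uᴴ)ᵀ * K =
      (K * U.map star * K) * (trace X • 1 - K * Xᵀ * K) * (K * U.map star * K)ᴴ := by
  have hKK : K * K = 1 := by
    simpa only [star_eq_conjTranspose, hKh] using mem_unitaryGroup_iff.mp hK
  have hVV : (K * U.map star * K) * (K * U.map star * K)ᴴ = 1 :=
    mem_unitaryGroup_iff.mp (mul_map_star_mul_mem_unitaryGroup hK hU)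
  rw [trace_mul_mul_conjTranspose_of_mem_unitaryGroup hU, transpose_mul_mul_conjTranspose,
    mul_sub, sub_mul, mul_smul_comm, mul_one, smul_mul_assoc, hVV]
  congr 1
  simp only [conjTranspose_mul, hKh, mul_assoc]
  simp only [← mul_assoc K K, hKK, one_mul]

end UnitaryConj

def antidiagFlip : Matrix (Fin 3) (Fin 3) ℂ := !![0, 0, 1; 0, -1, 0; 1, 0, 0]

theorem conjTranspose_antidiagFlip : antidiagFlipᴴ = antidiagFlip := by
  ext i j
  fin_cases i <;> fin_cases j <;> simp [antidiagFlip]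

theorem antidiagFlip_mem_unitaryGroup : antidiagFlip ∈ unitaryGroup (Fin 3) ℂ := by
  rw [mem_unitaryGroup_iff, star_eq_conjTranspose, conjTranspose_antidiagFlip, antidiagFlip,
    mul_fin_three, one_fin_three]
  norm_num

theorem antidiagFlip_mul_map_star_mul_antidiagFlip (U : Matrix (Fin 3) (Fin 3) ℂ) :
    antidiagFlip * U.map star * antidiagFlip =
      !![star (U 2 2), -star (U 2 1), star (U 2 0);
         -star (U 1 2), star (U 1 1), -star (U 1 0);
         star (U 0 2), -star (U 0 1), star (U 0 0)] := by
  ext i j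
  fin_cases i <;> fin_cases j <;>
    simp [antidiagFlip, mul_apply, vecMul, dotProduct, Fin.sum_univ_three]

theorem inv_sqrt_two_mul_inv_sqrt_two :
    ((Real.sqrt 2 : ℂ))⁻¹ * ((Real.sqrt 2 : ℂ))⁻¹ = 1 / 2 := by
  rw [← mul_inv, ← ofReal_mul, Real.mul_self_sqrt zero_le_two]
  norm_num

theorem LS1_eq_trace_smul_one_sub (X : Matrix (Fin 3) (Fin 3) ℂ) :
    LS1 X = (1 / 2 : ℂ) • (trace X • 1 - antidiagFlip * Xᵀ * antidiagFlip) := by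
  simp only [LS1, J1x, J1y, smul_mul_assoc, mul_smul_comm, smul_smul,
    inv_sqrt_two_mul_inv_sqrt_two]
  ext i j
  fin_cases i <;> fin_cases j <;>
    simp [antidiagFlip, J1z, mul_apply, vecMul, dotProduct, Fin.sum_univ_three,
      trace_fin_three, one_apply] <;>
    ring_nf <;> simp only [I_sq] <;> ring

/-- global unitary (`U(3)`) covariance of the j = 1 Landau–Streater channel:
for every unitary `U = (u_{αβ})`, the matrix
`V = [[conj u₃₃, -conj u₃₂, conj u₃₁], [-conj u₂₃, conj u₂₂, -conj u₂₁],
[conj u₁₃, -conj u₁₂, conj u₁₁]]` is unitary and `Φ(U X U†) = V Φ(X) V†` for all `X`. -/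
theorem landau_streater_u3_covariance (U : Matrix (Fin 3) (Fin 3) ℂ)
    (hU : U ∈ Matrix.unitaryGroup (Fin 3) ℂ)
    (V : Matrix (Fin 3) (Fin 3) ℂ)
    (hV : V = !![star (U 2 2), -star (U 2 1), star (U 2 0);
                 -star (U 1 2), star (U 1 1), -star (U 1 0);
                 star (U 0 2), -star (U 0 1), star (U 0 0)]) :
    V ∈ Matrix.unitaryGroup (Fin 3) ℂ ∧
      ∀ X : Matrix (Fin 3) (Fin 3) ℂ, LS1 (U * X * Uᴴ) = V * LS1 X * Vᴴ := by
  rw [hV, ← antidiagFlip_mul_map_star_mul_antidiagFlip]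
  refine ⟨mul_map_star_mul_mem_unitaryGroup antidiagFlip_mem_unitaryGroup hU, fun X => ?_⟩
  rw [LS1_eq_trace_smul_one_sub, LS1_eq_trace_smul_one_sub, mul_smul_comm, smul_mul_assoc,
    trace_smul_one_sub_mul_transpose_mul_unitary_conj antidiagFlip_mem_unitaryGroup
      conjTranspose_antidiagFlip hU]
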